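/- Let (C, ℓ_C) and (D, ℓ_D) be orthogonalizable Λ-spaces, let A : C → D be a Λ-linear map, and let (v_1, …, v_n) be an orthogonal ordered basis for C. Then there exists an orthogonal ordered basis (v_1', …, v_n') of C such that: (i) ℓ_C(v_i') = ℓ_C(v_i) and ℓ_D(A v_i') ≤ ℓ_D(A v_i) for each i; and (ii) letting U = {i ∈ {1,…,n} : A v_i' ≠ 0}, the ordered collection (A v_i' : i ∈ U) is orthogonal in D (in particular (v_i' : i ∉ U) is an orthogonal ordered basis of ker A). -/

import Mathlib

/-!
Formalization setup following Usher–Zhang, "Persistent homology and Floer–Novikov theory".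

We fix an additive subgroup `Γ ≤ ℝ` and abstract the Novikov field `Λ = Λ^{K,Γ}` as a field
`Λ` equipped with a valuation `ν : Λ → ℝ ∪ {∞}` (encoded in `EReal`, with `ν x = ⊤ ↔ x = 0`)
satisfying (V1),(V2),(V3), whose values on nonzero elements lie in (and fill out) `Γ`.

Filtration functions `ℓ : C → ℝ ∪ {-∞}` are encoded as `EReal`-valued functions which never
take the value `⊤`, with `ℓ x = ⊥ ↔ x = 0`.
-/

noncomputable section

/-- The Novikov field `Λ^{K,Γ}` together with its valuation `ν(Σ a_g T^g) = min {g : a_g ≠ 0}`: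
a field `Λ` with a function `ν : Λ → ℝ ∪ {∞}` such that (V1) `ν x = ∞ ↔ x = 0`,
(V2) `ν (xy) = ν x + ν y`, (V3) `ν (x+y) ≥ min (ν x) (ν y)`, and the values of `ν` on
nonzero elements are exactly the elements of `Γ`. -/
structure NovikovStructure (Γ : AddSubgroup ℝ) (Λ : Type*) [Field Λ] where
  ν : Λ → EReal
  ν_eq_top_iff : ∀ x : Λ, ν x = ⊤ ↔ x = 0
  ν_mul : ∀ x y : Λ, ν (x * y) = ν x + ν y
  min_le_ν_add : ∀ x y : Λ, min (ν x) (ν y) ≤ ν (x + y)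
  ν_mem : ∀ x : Λ, x ≠ 0 → ∃ g : Γ, ν x = ((g : ℝ) : EReal)
  ν_surj : ∀ g : Γ, ∃ x : Λ, ν x = ((g : ℝ) : EReal)

/-- `(C, ℓ)` is a non-Archimedean normed vector space over `Λ` (Definition 2.2):
(F1) `ℓ x = -∞ ↔ x = 0`; (F2) `ℓ (λ • x) = ℓ x - ν λ`; (F3) `ℓ (x+y) ≤ max (ℓ x) (ℓ y)`. -/
structure IsNonArchNorm {Γ : AddSubgroup ℝ} {Λ : Type*} [Field Λ] (NS : NovikovStructure Γ Λ)
    {C : Type*} [AddCommGroup C] [Module Λ C] (ℓ : C → EReal) : Prop where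
  eq_bot_iff : ∀ x : C, ℓ x = ⊥ ↔ x = 0
  ne_top : ∀ x : C, ℓ x ≠ ⊤
  smul_eq : ∀ (a : Λ) (x : C), ℓ (a • x) = ℓ x - NS.ν a
  add_le : ∀ x y : C, ℓ (x + y) ≤ max (ℓ x) (ℓ y)

/-- A finite ordered family `(w i)` in `(C, ℓ)` is orthogonal:
`ℓ (∑ λᵢ • wᵢ) = maxᵢ ℓ (λᵢ • wᵢ)` for all coefficients `λᵢ ∈ Λ` (Definition 2.8). -/
def IsOrthFamily (Λ : Type*) [Field Λ] {C : Type*} [AddCommGroup C] [Module Λ C]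
    (ℓ : C → EReal) {ι : Type*} [Fintype ι] (w : ι → C) : Prop :=
  ∀ a : ι → Λ, ℓ (∑ i, a i • w i) = ⨆ i, ℓ (a i • w i)

/-- Two subspaces `V, W` of `(C, ℓ)` are orthogonal if
`ℓ (v + w) = max (ℓ v) (ℓ w)` for all `v ∈ V`, `w ∈ W` (Definition 2.8). -/
def AreOrthogonal {Λ : Type*} [Field Λ] {C : Type*} [AddCommGroup C] [Module Λ C]
    (ℓ : C → EReal) (V W : Submodule Λ C) : Prop :=
  ∀ v ∈ V, ∀ w ∈ W, ℓ (v + w) = max (ℓ v) (ℓ w)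

/-- An orthogonalizable `Λ`-space: a finite-dimensional non-Archimedean normed `Λ`-vector
space admitting an orthogonal (finite) basis. -/
def IsOrthogonalizable {Γ : AddSubgroup ℝ} {Λ : Type*} [Field Λ] (NS : NovikovStructure Γ Λ)
    {C : Type*} [AddCommGroup C] [Module Λ C] (ℓ : C → EReal) : Prop :=
  IsNonArchNorm NS ℓ ∧ ∃ (n : ℕ) (b : Module.Basis (Fin n) Λ C), IsOrthFamily Λ ℓ ⇑b


/-!
Induction on the number of basis vectors, by Gaussian elimination on the matrix `c i α` of `A`
with respect to an orthogonal basis `w` of `D`. Take as pivot an entry `(i₀, α₀)` maximising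
`ℓD (c i α • w α) - ℓC (v i)`, and clear row `α₀` by subtracting `(c i α₀ / c i₀ α₀) • v i₀`
from the other columns. By maximality the subtracted vector lies below `v i` in `C` and its
image below `A (v i)` in `D`, so since `v i₀` is orthogonal to the other columns these shears
change no level in `C` and raise none in `D`. Afterwards `A (v i₀)` is orthogonal to the vectors
with vanishing `α₀`-coordinate, among them the new images of the other columns, and the
induction hypothesis applies to those columns.
-/

namespace NovikovStructure

variable {Γ : AddSubgroup ℝ} {Λ : Type*} [Field Λ] (NS : NovikovStructure Γ Λ)

theorem exists_ν_eq_coe {x : Λ} (hx : x ≠ 0) : ∃ g : ℝ, NS.ν x = g :=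
  let ⟨g, hg⟩ := NS.ν_mem x hx
  ⟨g, hg⟩

theorem ν_one : NS.ν 1 = 0 := by
  obtain ⟨g, hg⟩ := NS.exists_ν_eq_coe one_ne_zero
  have h := NS.ν_mul 1 1
  rw [mul_one, hg] at h
  have : g = g + g := by exact_mod_cast h
  rw [hg, show g = 0 by linarith, EReal.coe_zero]

theorem ν_neg_one : NS.ν (-1) = 0 := by
  obtain ⟨g, hg⟩ := NS.exists_ν_eq_coe (neg_ne_zero.mpr one_ne_zero)
  have h := NS.ν_mul (-1) (-1)
  rw [neg_mul_neg, mul_one, ν_one, hg] at h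
  have : 0 = g + g := by exact_mod_cast h
  rw [hg, show g = 0 by linarith, EReal.coe_zero]

end NovikovStructure

namespace IsNonArchNorm

variable {Γ : AddSubgroup ℝ} {Λ : Type*} [Field Λ] {NS : NovikovStructure Γ Λ}
  {C : Type*} [AddCommGroup C] [Module Λ C] {ℓ : C → EReal}

theorem map_zero (hl : IsNonArchNorm NS ℓ) : ℓ 0 = ⊥ :=
  (hl.eq_bot_iff 0).mpr rfl

theorem exists_eq_coe (hl : IsNonArchNorm NS ℓ) {x : C} (hx : x ≠ 0) : ∃ r : ℝ, ℓ x = r := by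
  induction h : ℓ x using EReal.rec with
  | bot => exact absurd ((hl.eq_bot_iff x).mp h) hx
  | coe r => exact ⟨r, rfl⟩
  | top => exact absurd h (hl.ne_top x)

theorem map_neg (hl : IsNonArchNorm NS ℓ) (x : C) : ℓ (-x) = ℓ x := by
  rw [← neg_one_smul Λ x, hl.smul_eq, NS.ν_neg_one, sub_zero]

theorem map_sub_le (hl : IsNonArchNorm NS ℓ) (x y : C) : ℓ (x - y) ≤ max (ℓ x) (ℓ y) := by
  simpa only [sub_eq_add_neg, hl.map_neg] using hl.add_le x (-y)

theorem smul_le_smul (hl : IsNonArchNorm NS ℓ) (a : Λ) {x y : C} (h : ℓ x ≤ ℓ y) :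
    ℓ (a • x) ≤ ℓ (a • y) := by
  rw [hl.smul_eq, hl.smul_eq]
  exact EReal.sub_le_sub h le_rfl

theorem smul_eq_smul (hl : IsNonArchNorm NS ℓ) (a : Λ) {x y : C} (h : ℓ x = ℓ y) :
    ℓ (a • x) = ℓ (a • y) := by
  rw [hl.smul_eq, hl.smul_eq, h]

theorem map_sum_le (hl : IsNonArchNorm NS ℓ) {ι : Type*} [Fintype ι] (y : ι → C) :
    ℓ (∑ i, y i) ≤ ⨆ i, ℓ (y i) := by
  classical
  suffices ∀ s : Finset ι, ℓ (∑ i ∈ s, y i) ≤ ⨆ i, ℓ (y i) from this Finset.univ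
  intro s
  induction s using Finset.induction_on with
  | empty => simp [hl.map_zero]
  | insert i s hi ih =>
    rw [Finset.sum_insert hi]
    exact (hl.add_le _ _).trans (max_le (le_iSup (fun i => ℓ (y i)) i) ih)

theorem max_map_add_eq (hl : IsNonArchNorm NS ℓ) {r : C} {t : EReal} (hr : ℓ r ≤ t) (x : C) :
    max t (ℓ (r + x)) = max t (ℓ x) := by
  apply le_antisymm
  · exact max_le (le_max_left _ _) ((hl.add_le r x).trans (max_le_max_right _ hr))
  · refine max_le (le_max_left _ _) ?_
    calc ℓ x = ℓ (-r + (r + x)) := by rw [neg_add_cancel_left]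
      _ ≤ max (ℓ (-r)) (ℓ (r + x)) := hl.add_le _ _
      _ ≤ max t (ℓ (r + x)) := by rw [hl.map_neg]; exact max_le_max_right _ hr

variable {D : Type*} [AddCommGroup D] [Module Λ D] {ℓD : D → EReal}

theorem smul_le_of_sub_le_sub (hl : IsNonArchNorm NS ℓ) (hlD : IsNonArchNorm NS ℓD)
    {x y : C} {z : D} (hx : x ≠ 0) (hy : y ≠ 0) (hz : z ≠ 0) (a : Λ)
    (h : ℓD (a • z) - ℓ y ≤ ℓD z - ℓ x) : ℓ (a • x) ≤ ℓ y := by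
  rcases eq_or_ne a 0 with rfl | ha
  · rw [zero_smul, hl.map_zero]; exact bot_le
  obtain ⟨X, hX⟩ := hl.exists_eq_coe hx
  obtain ⟨Y, hY⟩ := hl.exists_eq_coe hy
  obtain ⟨Z, hZ⟩ := hlD.exists_eq_coe hz
  obtain ⟨g, hg⟩ := NS.exists_ν_eq_coe ha
  rw [hlD.smul_eq, hX, hY, hZ, hg] at h
  rw [hl.smul_eq, hX, hY, hg]
  norm_cast at h ⊢
  linarith

end IsNonArchNorm

theorem AreOrthogonal.mono {Λ : Type*} [Field Λ] {C : Type*} [AddCommGroup C] [Module Λ C]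
    {ℓ : C → EReal} {V W V' W' : Submodule Λ C} (h : AreOrthogonal ℓ V W) (hV : V' ≤ V)
    (hW : W' ≤ W) : AreOrthogonal ℓ V' W' :=
  fun v hv w hw => h v (hV hv) w (hW hw)

namespace IsOrthFamily

variable {Γ : AddSubgroup ℝ} {Λ : Type*} [Field Λ] {NS : NovikovStructure Γ Λ}
  {C : Type*} [AddCommGroup C] [Module Λ C] {ℓ : C → EReal} {ι : Type*} [Fintype ι] {z : ι → C}

theorem comp (hl : IsNonArchNorm NS ℓ) (hz : IsOrthFamily Λ ℓ z) {κ : Type*} [Fintype κ]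
    {σ : κ → ι} (hσ : Function.Injective σ) : IsOrthFamily Λ ℓ (z ∘ σ) := by
  classical
  intro a
  let a' : ι → Λ := Function.extend σ a 0
  have hsum : ∑ i, a' i • z i = ∑ j, a j • z (σ j) := by
    rw [← Finset.sum_subset (Finset.subset_univ (Finset.univ.image σ)), Finset.sum_image hσ.injOn]
    · simp only [a', hσ.extend_apply]
    · intro i _ hi
      have hi' : ¬∃ j, σ j = i := by simpa using hi
      simp only [a', Function.extend_apply' _ _ _ hi', Pi.zero_apply, zero_smul]
  have hlevel : (fun i => ℓ (a' i • z i)) = Function.extend σ (fun j => ℓ (a j • z (σ j))) ⊥ := by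
    funext i
    by_cases hi : ∃ j, σ j = i
    · obtain ⟨j, rfl⟩ := hi
      simp only [a', hσ.extend_apply]
    · simp only [a', Function.extend_apply' _ _ _ hi, Pi.zero_apply, Pi.bot_apply, zero_smul,
        hl.map_zero]
  have := hz a'
  rwa [hsum, hlevel, iSup_extend_bot hσ] at this

theorem smul_eq_zero_of_sum_eq_zero (hl : IsNonArchNorm NS ℓ) (hz : IsOrthFamily Λ ℓ z)
    {a : ι → Λ} (ha : ∑ i, a i • z i = 0) (i : ι) : a i • z i = 0 := by
  have h := hz a
  rw [ha, hl.map_zero, eq_comm, iSup_eq_bot] at h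
  exact (hl.eq_bot_iff _).mp (h i)

theorem linearIndependent (hl : IsNonArchNorm NS ℓ) (hz : IsOrthFamily Λ ℓ z)
    (h0 : ∀ i, z i ≠ 0) : LinearIndependent Λ z :=
  Fintype.linearIndependent_iff.mpr fun _ ha i =>
    (smul_eq_zero.mp (hz.smul_eq_zero_of_sum_eq_zero hl ha i)).resolve_right (h0 i)

theorem map_eq_iSup_repr {b : Module.Basis ι Λ C} (hb : IsOrthFamily Λ ℓ ⇑b) (x : C) :
    ℓ x = ⨆ i, ℓ (b.repr x i • b i) := by
  conv_lhs => rw [← b.sum_repr x]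
  exact hb _

theorem areOrthogonal_span_image_compl (hl : IsNonArchNorm NS ℓ) (hz : IsOrthFamily Λ ℓ z)
    (s : Set ι) : AreOrthogonal ℓ (Submodule.span Λ (z '' s)) (Submodule.span Λ (z '' sᶜ)) := by
  classical
  have hrepr : ∀ t : Set ι, ∀ x ∈ Submodule.span Λ (z '' t),
      ∃ a : ι → Λ, (∀ i ∉ t, a i = 0) ∧ ∑ i, a i • z i = x := by
    intro t x hx
    obtain ⟨l, hl, rfl⟩ := (Finsupp.mem_span_image_iff_linearCombination Λ).mp hx
    refine ⟨l, fun i hi => Finsupp.notMem_support_iff.mp fun h => hi (hl h), ?_⟩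
    rw [Finsupp.linearCombination_apply, Finsupp.sum_fintype _ _ fun i => zero_smul Λ (z i)]
  intro v hv w hw
  obtain ⟨a, ha, rfl⟩ := hrepr s v hv
  obtain ⟨b, hb, rfl⟩ := hrepr sᶜ w hw
  have hmax : ∀ i, ℓ ((a i + b i) • z i) = max (ℓ (a i • z i)) (ℓ (b i • z i)) := by
    intro i
    by_cases hi : i ∈ s
    · simp [hb i (by simpa using hi), hl.map_zero]
    · simp [ha i hi, hl.map_zero]
  rw [← Finset.sum_add_distrib]
  simp only [← add_smul]
  rw [hz, hz, hz]
  simp only [hmax]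
  exact iSup_sup_eq

theorem areOrthogonal_span_singleton_ker_coord (hl : IsNonArchNorm NS ℓ)
    {b : Module.Basis ι Λ C} (hb : IsOrthFamily Λ ℓ ⇑b) (i : ι) :
    AreOrthogonal ℓ (Λ ∙ b i) (LinearMap.ker (b.coord i)) := by
  refine (hb.areOrthogonal_span_image_compl hl {i}).mono (by rw [Set.image_singleton]) ?_
  intro x hx
  refine b.mem_span_image.mpr fun j hj hji => ?_
  rw [Set.mem_singleton_iff.mp hji] at hj
  exact Finsupp.mem_support_iff.mp hj hx

end IsOrthFamily

theorem isOrthFamily_iff_succAbove {Γ : AddSubgroup ℝ} {Λ : Type*} [Field Λ]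
    {NS : NovikovStructure Γ Λ} {C : Type*} [AddCommGroup C] [Module Λ C] {ℓ : C → EReal}
    (hl : IsNonArchNorm NS ℓ) {m : ℕ} {u : Fin (m + 1) → C} (i₀ : Fin (m + 1)) :
    IsOrthFamily Λ ℓ u ↔ IsOrthFamily Λ ℓ (u ∘ i₀.succAbove) ∧
      AreOrthogonal ℓ (Λ ∙ u i₀) (Submodule.span Λ (Set.range (u ∘ i₀.succAbove))) := by
  have hrange : Set.range (u ∘ i₀.succAbove) = u '' {i₀}ᶜ := by
    rw [Set.range_comp, Fin.range_succAbove]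
  refine ⟨fun hu => ⟨hu.comp hl Fin.succAbove_right_injective, ?_⟩, fun ⟨hy, hx⟩ a => ?_⟩
  · exact (hu.areOrthogonal_span_image_compl hl {i₀}).mono (by rw [Set.image_singleton])
      (by rw [hrange])
  have hsplit : ∀ f : Fin (m + 1) → EReal, ⨆ i, f i = max (f i₀) (⨆ j, f (i₀.succAbove j)) := by
    intro f
    rw [iSup_split_single f i₀]
    simp_rw [← Set.mem_compl_singleton_iff, ← Fin.range_succAbove i₀, iSup_range]
  have hrest : ∑ j, a (i₀.succAbove j) • u (i₀.succAbove j) ∈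
      Submodule.span Λ (Set.range (u ∘ i₀.succAbove)) :=
    Submodule.sum_mem _ fun j _ => Submodule.smul_mem _ _ (Submodule.subset_span ⟨j, rfl⟩)
  rw [Fin.sum_univ_succAbove _ i₀, hsplit, hx _ (Submodule.smul_mem _ _
    (Submodule.mem_span_singleton_self _)) _ hrest]
  exact congrArg _ (hy fun j => a (i₀.succAbove j))

namespace AreOrthogonal

variable {Γ : AddSubgroup ℝ} {Λ : Type*} [Field Λ] {NS : NovikovStructure Γ Λ}
  {C : Type*} [AddCommGroup C] [Module Λ C] {ℓ : C → EReal} {x₀ : C} {S : Submodule Λ C}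

theorem map_smul_add (h : AreOrthogonal ℓ (Λ ∙ x₀) S) (μ : Λ) {w : C} (hw : w ∈ S) :
    ℓ (μ • x₀ + w) = max (ℓ (μ • x₀)) (ℓ w) :=
  h _ (Submodule.smul_mem _ μ (Submodule.mem_span_singleton_self x₀)) w hw

theorem span_singleton_add (hl : IsNonArchNorm NS ℓ) (h : AreOrthogonal ℓ (Λ ∙ x₀) S) {r : C}
    (hr : r ∈ S) (hle : ℓ r ≤ ℓ x₀) : AreOrthogonal ℓ (Λ ∙ (x₀ + r)) S := by
  intro v hv k hk
  obtain ⟨μ, rfl⟩ := Submodule.mem_span_singleton.mp hv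
  have hμr : ℓ (μ • r) ≤ ℓ (μ • x₀) := hl.smul_le_smul μ hle
  calc ℓ (μ • (x₀ + r) + k) = ℓ (μ • x₀ + (μ • r + k)) := by rw [smul_add, add_assoc]
    _ = max (ℓ (μ • x₀)) (ℓ (μ • r + k)) := h.map_smul_add μ (S.add_mem (S.smul_mem μ hr) hk)
    _ = max (ℓ (μ • x₀)) (ℓ k) := hl.max_map_add_eq hμr k
    _ = max (ℓ (μ • (x₀ + r))) (ℓ k) := by
      rw [smul_add, h.map_smul_add μ (S.smul_mem μ hr), max_eq_left hμr]

theorem map_smul_sub_smul (hl : IsNonArchNorm NS ℓ) (h : AreOrthogonal ℓ (Λ ∙ x₀) S) {y : C}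
    (hy : y ∈ S) {t : Λ} (ht : ℓ (t • x₀) ≤ ℓ y) (b : Λ) :
    ℓ (b • (y - t • x₀)) = ℓ (b • y) := by
  have hdecomp : b • (y - t • x₀) = (-(b * t)) • x₀ + b • y := by
    rw [smul_sub, neg_smul, mul_smul]; abel
  rw [hdecomp, h.map_smul_add _ (S.smul_mem b hy), neg_smul, hl.map_neg, mul_smul]
  exact max_eq_right (hl.smul_le_smul b ht)

variable {ι : Type*} [Fintype ι] {y : ι → C} {t : ι → Λ}

theorem map_smul_add_sum_sub_smul (hl : IsNonArchNorm NS ℓ) (hy : IsOrthFamily Λ ℓ y)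
    (h : AreOrthogonal ℓ (Λ ∙ x₀) (Submodule.span Λ (Set.range y)))
    (ht : ∀ j, ℓ (t j • x₀) ≤ ℓ (y j)) (μ : Λ) (b : ι → Λ) :
    ℓ (μ • x₀ + ∑ j, b j • (y j - t j • x₀)) = max (ℓ (μ • x₀)) (⨆ j, ℓ (b j • y j)) := by
  set s := ∑ j, b j * t j
  have hY : ∑ j, b j • y j ∈ Submodule.span Λ (Set.range y) :=
    Submodule.sum_mem _ fun j _ => Submodule.smul_mem _ _ (Submodule.subset_span ⟨j, rfl⟩)
  have hs : ℓ (s • x₀) ≤ ℓ (∑ j, b j • y j) := by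
    rw [Finset.sum_smul, hy b]
    refine (hl.map_sum_le _).trans (iSup_mono fun j => ?_)
    rw [mul_smul]
    exact hl.smul_le_smul _ (ht j)
  have hdecomp : μ • x₀ + ∑ j, b j • (y j - t j • x₀) = -(s • x₀) + μ • x₀ + ∑ j, b j • y j := by
    simp only [smul_sub, Finset.sum_sub_distrib, s, Finset.sum_smul, mul_smul]
    abel
  rw [hdecomp, ← neg_smul, ← add_smul, h.map_smul_add _ hY, add_smul, neg_smul, ← hy b,
    max_comm, hl.max_map_add_eq (by rwa [hl.map_neg]), max_comm]

theorem isOrthFamily_sub_smul (hl : IsNonArchNorm NS ℓ) (hy : IsOrthFamily Λ ℓ y)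
    (h : AreOrthogonal ℓ (Λ ∙ x₀) (Submodule.span Λ (Set.range y)))
    (ht : ∀ j, ℓ (t j • x₀) ≤ ℓ (y j)) : IsOrthFamily Λ ℓ (fun j => y j - t j • x₀) := by
  intro b
  have := h.map_smul_add_sum_sub_smul hl hy ht 0 b
  rw [zero_smul, zero_add, hl.map_zero, max_eq_right bot_le] at this
  simp only [this, h.map_smul_sub_smul hl (Submodule.subset_span ⟨_, rfl⟩) (ht _)]

theorem span_range_sub_smul (hl : IsNonArchNorm NS ℓ) (hy : IsOrthFamily Λ ℓ y)
    (h : AreOrthogonal ℓ (Λ ∙ x₀) (Submodule.span Λ (Set.range y)))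
    (ht : ∀ j, ℓ (t j • x₀) ≤ ℓ (y j)) :
    AreOrthogonal ℓ (Λ ∙ x₀) (Submodule.span Λ (Set.range fun j => y j - t j • x₀)) := by
  intro v hv w hw
  obtain ⟨μ, rfl⟩ := Submodule.mem_span_singleton.mp hv
  obtain ⟨b, rfl⟩ := (Submodule.mem_span_range_iff_exists_fun Λ).mp hw
  have hw0 := h.map_smul_add_sum_sub_smul hl hy ht 0 b
  rw [zero_smul, zero_add, hl.map_zero, max_eq_right bot_le] at hw0
  rw [h.map_smul_add_sum_sub_smul hl hy ht, hw0]

end AreOrthogonal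

namespace IsOrthFamily

variable {Γ : AddSubgroup ℝ} {Λ : Type*} [Field Λ] {NS : NovikovStructure Γ Λ}
  {C : Type*} [AddCommGroup C] [Module Λ C] {ℓ : C → EReal} {κ : Type*} [Fintype κ]
  {b : Module.Basis κ Λ C}

theorem map_eq_of_forall_le (hb : IsOrthFamily Λ ℓ ⇑b) {α₀ : κ} {z : C}
    (h : ∀ α, ℓ (b.repr z α • b α) ≤ ℓ (b.repr z α₀ • b α₀)) :
    ℓ z = ℓ (b.repr z α₀ • b α₀) :=
  (hb.map_eq_iSup_repr z).trans
    (le_antisymm (iSup_le h) (le_iSup (fun α => ℓ (b.repr z α • b α)) α₀))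

theorem areOrthogonal_ker_coord_of_map_eq (hl : IsNonArchNorm NS ℓ) (hb : IsOrthFamily Λ ℓ ⇑b)
    {α : κ} {z : C} (hz : ℓ z = ℓ (b.repr z α • b α)) :
    AreOrthogonal ℓ (Λ ∙ z) (LinearMap.ker (b.coord α)) := by
  have hr : z - b.repr z α • b α ∈ LinearMap.ker (b.coord α) := by simp
  have horth := hb.areOrthogonal_span_singleton_ker_coord hl α
  have hsplit := horth.map_smul_add (b.repr z α) hr
  rw [add_sub_cancel, ← hz] at hsplit
  have := (horth.mono (Submodule.span_singleton_smul_le Λ (b.repr z α) (b α)) le_rfl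
    ).span_singleton_add hl hr (hz ▸ (le_max_right _ _).trans hsplit.symm.le)
  rwa [add_sub_cancel] at this

end IsOrthFamily

section Elimination

variable {Γ : AddSubgroup ℝ} {Λ : Type*} [Field Λ] {NS : NovikovStructure Γ Λ}
  {C D : Type*} [AddCommGroup C] [Module Λ C] [AddCommGroup D] [Module Λ D]
  {ℓC : C → EReal} {ℓD : D → EReal}

theorem exists_pivot_elimination (hC : IsNonArchNorm NS ℓC) (hD : IsNonArchNorm NS ℓD)
    {κ : Type*} [Fintype κ] {w : Module.Basis κ Λ D} (hw : IsOrthFamily Λ ℓD ⇑w)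
    (A : C →ₗ[Λ] D) {m : ℕ} {u : Fin (m + 1) → C} (hu : ∀ i, u i ≠ 0) :
    ∃ (i₀ : Fin (m + 1)) (t : Fin m → Λ) (K : Submodule Λ D),
      (∀ j, ℓC (t j • u i₀) ≤ ℓC (u (i₀.succAbove j))) ∧
      (∀ j, ℓD (t j • A (u i₀)) ≤ ℓD (A (u (i₀.succAbove j)))) ∧
      AreOrthogonal ℓD (Λ ∙ A (u i₀)) K ∧
      ∀ j, A (u (i₀.succAbove j)) - t j • A (u i₀) ∈ K := by
  classical
  by_cases hA : ∀ i, A (u i) = 0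
  · refine ⟨0, 0, ⊤, fun j => ?_, fun j => ?_, ?_, fun j => Submodule.mem_top⟩
    · simp [hC.map_zero]
    · simp [hD.map_zero]
    · intro v hv k _
      rw [hA 0, Submodule.span_singleton_eq_bot.mpr rfl, Submodule.mem_bot] at hv
      simp [hv, hD.map_zero]
  push Not at hA
  obtain ⟨i₁, hi₁⟩ := hA
  set c : Fin (m + 1) → κ → Λ := fun i α => w.repr (A (u i)) α
  obtain ⟨α₁, hα₁⟩ : ∃ α, c i₁ α ≠ 0 := by
    by_contra! h
    exact hi₁ (w.forall_coord_eq_zero_iff.mp h)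
  obtain ⟨⟨i₀, α₀⟩, hc₀, hmax⟩ :=
    Finset.exists_max_image (Finset.univ.filter fun q : Fin (m + 1) × κ => c q.1 q.2 ≠ 0)
      (fun q => ℓD (c q.1 q.2 • w q.2) - ℓC (u q.1)) ⟨(i₁, α₁), by simpa using hα₁⟩
  simp only [Finset.mem_filter, Finset.mem_univ, true_and, Prod.forall] at hc₀ hmax
  set c₀ := c i₀ α₀
  have hrow : ℓD (A (u i₀)) = ℓD (c₀ • w α₀) := hw.map_eq_of_forall_le fun α => by
    by_cases hα : c i₀ α = 0
    · rw [show w.repr (A (u i₀)) α = 0 from hα, zero_smul, hD.map_zero]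
      exact bot_le
    obtain ⟨r, hr⟩ := hC.exists_eq_coe (hu i₀)
    have h := hmax i₀ α hα
    rw [hr] at h
    have := add_le_add_left h (r : EReal)
    rwa [EReal.sub_add_cancel, EReal.sub_add_cancel] at this
  refine ⟨i₀, fun j => c (i₀.succAbove j) α₀ / c₀, LinearMap.ker (w.coord α₀), fun j => ?_,
    fun j => ?_, ?_, fun j => ?_⟩
  · by_cases hcj : c (i₀.succAbove j) α₀ = 0
    · simp [hcj, hC.map_zero]
    refine hC.smul_le_of_sub_le_sub hD (hu _) (hu _) (smul_ne_zero hc₀ (w.ne_zero α₀)) _ ?_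
    rw [smul_smul, div_mul_cancel₀ _ hc₀]
    exact hmax _ _ hcj
  · rw [hD.smul_eq_smul _ hrow, smul_smul, div_mul_cancel₀ _ hc₀,
      hw.map_eq_iSup_repr (A (u _))]
    exact le_iSup (fun α => ℓD (w.repr _ α • w α)) α₀
  · exact hw.areOrthogonal_ker_coord_of_map_eq hD hrow
  · rw [LinearMap.mem_ker, map_sub, map_smul, w.coord_apply, w.coord_apply, smul_eq_mul]
    change c (i₀.succAbove j) α₀ - c (i₀.succAbove j) α₀ / c₀ * c₀ = 0
    rw [div_mul_cancel₀ _ hc₀, sub_self]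

end Elimination

theorem Submodule.span_singleton_sup_span_range_sub_smul {R M ι : Type*} [Ring R]
    [AddCommGroup M] [Module R M] (x : M) (y : ι → M) (t : ι → R) :
    R ∙ x ⊔ span R (Set.range fun j => y j - t j • x) = R ∙ x ⊔ span R (Set.range y) := by
  have hx : ∀ {N : Submodule R M}, R ∙ x ≤ N → ∀ j, t j • x ∈ N := fun {N} hN j =>
    N.smul_mem (t j) (hN (mem_span_singleton_self x))
  refine le_antisymm (sup_le le_sup_left (span_le.mpr ?_)) (sup_le le_sup_left (span_le.mpr ?_))
  · rintro _ ⟨j, rfl⟩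
    exact sub_mem (mem_sup_right (subset_span ⟨j, rfl⟩)) (hx le_sup_left j)
  · rintro _ ⟨j, rfl⟩
    rw [← sub_add_cancel (y j) (t j • x)]
    exact add_mem (mem_sup_right (subset_span ⟨j, rfl⟩)) (hx le_sup_left j)

theorem ker_eq_span_image_of_isOrthFamily {Γ : AddSubgroup ℝ} {Λ : Type*} [Field Λ]
    {NS : NovikovStructure Γ Λ} {C D : Type*} [AddCommGroup C] [Module Λ C] [AddCommGroup D]
    [Module Λ D] {ℓ : D → EReal} (hl : IsNonArchNorm NS ℓ) {ι : Type*} [Fintype ι]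
    (b : Module.Basis ι Λ C) (A : C →ₗ[Λ] D) (h : IsOrthFamily Λ ℓ fun i => A (b i)) :
    LinearMap.ker A = Submodule.span Λ (b '' {i | A (b i) = 0}) := by
  refine le_antisymm (fun x hx => b.mem_span_image.mpr fun i hi => ?_) (Submodule.span_le.mpr ?_)
  · have hsum : ∑ i, b.repr x i • A (b i) = 0 := by
      simp only [← map_smul, ← map_sum, b.sum_repr, LinearMap.mem_ker.mp hx]
    exact (smul_eq_zero.mp (h.smul_eq_zero_of_sum_eq_zero hl hsum i)).resolve_left
      (Finsupp.mem_support_iff.mp hi)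
  · rintro _ ⟨i, hi, rfl⟩
    exact hi

section Induction

variable {Γ : AddSubgroup ℝ} {Λ : Type*} [Field Λ] {NS : NovikovStructure Γ Λ}
  {C D : Type*} [AddCommGroup C] [Module Λ C] [AddCommGroup D] [Module Λ D]
  {ℓC : C → EReal} {ℓD : D → EReal}

theorem exists_isOrthFamily_map (hC : IsNonArchNorm NS ℓC) (hD : IsNonArchNorm NS ℓD)
    {κ : Type*} [Fintype κ] {w : Module.Basis κ Λ D} (hw : IsOrthFamily Λ ℓD ⇑w)
    (A : C →ₗ[Λ] D) {m : ℕ} {u : Fin m → C} (hu : IsOrthFamily Λ ℓC u) (hu0 : ∀ i, u i ≠ 0) :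
    ∃ u' : Fin m → C, IsOrthFamily Λ ℓC u' ∧
      Submodule.span Λ (Set.range u') = Submodule.span Λ (Set.range u) ∧
      (∀ i, ℓC (u' i) = ℓC (u i)) ∧ (∀ i, ℓD (A (u' i)) ≤ ℓD (A (u i))) ∧
      IsOrthFamily Λ ℓD fun i => A (u' i) := by
  induction m with
  | zero => exact ⟨u, hu, rfl, fun i => i.elim0, fun i => i.elim0, fun a => by simp [hD.map_zero]⟩
  | succ m ih =>
    obtain ⟨i₀, t, K, htC, htD, hK, hKmem⟩ := exists_pivot_elimination hC hD hw A hu0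
    obtain ⟨x₀, y, rfl⟩ : ∃ x₀ y, u = Fin.insertNth i₀ x₀ y :=
      ⟨u i₀, Fin.removeNth i₀ u, (Fin.insertNth_self_removeNth i₀ u).symm⟩
    simp only [Fin.insertNth_apply_same, Fin.insertNth_apply_succAbove] at htC htD hK hKmem
    obtain ⟨hy, hx⟩ := (isOrthFamily_iff_succAbove hC i₀).mp hu
    rw [Fin.insertNth_comp_succAbove] at hy hx
    rw [Fin.insertNth_apply_same] at hx
    have hlev₁ : ∀ j, ℓC (y j - t j • x₀) = ℓC (y j) := fun j => by
      simpa using hx.map_smul_sub_smul hC (Submodule.subset_span ⟨j, rfl⟩) (htC j) 1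
    have hy₁0 : ∀ j, y j - t j • x₀ ≠ 0 := fun j h => by
      have := hu0 (i₀.succAbove j)
      rw [Fin.insertNth_apply_succAbove] at this
      exact this ((hC.eq_bot_iff _).mp (by rw [← hlev₁ j, h, hC.map_zero]))
    obtain ⟨y₂, hy₂, hspan₂, hlev₂, hA₂, hAy₂⟩ :=
      ih (hx.isOrthFamily_sub_smul hC hy htC) hy₁0
    refine ⟨Fin.insertNth i₀ x₀ y₂, ?_, ?_, ?_, ?_, ?_⟩
    · rw [isOrthFamily_iff_succAbove hC i₀, Fin.insertNth_comp_succAbove, Fin.insertNth_apply_same,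
        hspan₂]
      exact ⟨hy₂, hx.span_range_sub_smul hC hy htC⟩
    · rw [Fin.range_insertNth, Fin.range_insertNth]
      change Submodule.span Λ (insert x₀ _) = Submodule.span Λ (insert x₀ _)
      rw [Submodule.span_insert, Submodule.span_insert, hspan₂]
      exact Submodule.span_singleton_sup_span_range_sub_smul x₀ y t
    · refine (Fin.forall_iff_succAbove i₀).mpr ⟨by simp, fun j => ?_⟩
      simpa using (hlev₂ j).trans (hlev₁ j)
    · refine (Fin.forall_iff_succAbove i₀).mpr ⟨by simp, fun j => ?_⟩
      simp only [Fin.insertNth_apply_succAbove]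
      refine (hA₂ j).trans ?_
      rw [map_sub, map_smul]
      exact (hD.map_sub_le _ _).trans (max_le le_rfl (htD j))
    · rw [isOrthFamily_iff_succAbove hD i₀]
      simp only [Function.comp_def, Fin.insertNth_apply_same, Fin.insertNth_apply_succAbove]
      refine ⟨hAy₂, hK.mono le_rfl ?_⟩
      have hy₁K : Submodule.span Λ (Set.range fun j => y j - t j • x₀) ≤ K.comap A :=
        Submodule.span_le.mpr <| Set.range_subset_iff.mpr fun j => by simpa using hKmem j
      rw [Submodule.span_le]
      rintro _ ⟨j, rfl⟩
      exact hy₁K (hspan₂ ▸ Submodule.subset_span ⟨j, rfl⟩)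

end Induction

section
open Classical

/-- Theorem 3.5, algorithmic version of the SVD theorem: given orthogonal
bases as input, one can modify the basis of the domain so that its image family under `A`
is orthogonal, without changing filtration levels in the domain and without increasing
them in the codomain. -/
theorem algorithmic_svd
    {Γ : AddSubgroup ℝ} {Λ : Type*} [Field Λ] (NS : NovikovStructure Γ Λ)
    {C D : Type*} [AddCommGroup C] [Module Λ C] [AddCommGroup D] [Module Λ D]
    {ℓC : C → EReal} {ℓD : D → EReal}
    (hC : IsOrthogonalizable NS ℓC) (hD : IsOrthogonalizable NS ℓD)
    (A : C →ₗ[Λ] D) {n : ℕ} (v : Module.Basis (Fin n) Λ C) (hv : IsOrthFamily Λ ℓC ⇑v) :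
    ∃ v' : Module.Basis (Fin n) Λ C,
      IsOrthFamily Λ ℓC ⇑v' ∧
      (∀ i : Fin n, ℓC (v' i) = ℓC (v i)) ∧
      (∀ i : Fin n, ℓD (A (v' i)) ≤ ℓD (A (v i))) ∧
      IsOrthFamily Λ ℓD (fun i : {i : Fin n // A (v' i) ≠ 0} => A (v' (i : Fin n))) ∧
      LinearMap.ker A = Submodule.span Λ (⇑v' '' {i : Fin n | A (v' i) = 0}) := by
  obtain ⟨hC, -⟩ := hC
  obtain ⟨hD, _, w, hw⟩ := hD
  obtain ⟨u, hu, hspan, hlev, hAle, hAu⟩ := exists_isOrthFamily_map hC hD hw A hv v.ne_zero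
  have hu0 : ∀ i, u i ≠ 0 := fun i h =>
    v.ne_zero i ((hC.eq_bot_iff _).mp (by rw [← hlev i, h, hC.map_zero]))
  obtain ⟨v', rfl⟩ : ∃ v' : Module.Basis (Fin n) Λ C, ⇑v' = u :=
    ⟨.mk (hu.linearIndependent hC hu0) (by rw [hspan, v.span_eq]), Module.Basis.coe_mk _ _⟩
  exact ⟨v', hu, hlev, hAle, hAu.comp hD Subtype.val_injective,
    ker_eq_span_image_of_isOrthFamily hD v' A hAu⟩

end
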